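/- Let L_{p,q} be the GNS Hilbert space of (H_{p,q}, ε_q) and K_{p,f} the GNS space of (H_{p,s(f)}, ε_{s(f)} ∘ E_f^s), for a graph of amenable discrete quantum groups. For any path w = (e₁,…,eₙ) from p to q and any elementary tensor a = â₀ ⊗ ⋯ ⊗ aₙ ∈ H_w, one has ‖η_{p,q}(a)‖²_{L_{p,q}} = |ε_q(aₙ)|² · ‖η_{p,eₙ}(â₀ ⊗ ⋯ ⊗ a_{n-1})‖²_{K_{p,eₙ}} = |ε_q(aₙ)|² · ‖η_{p,ēₙ}(â₀ ⊗ ⋯ ⊗ â_{n-1} ⊗ 1)‖²_{K_{p,ēₙ}}. -/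

import Mathlib

/-! ## Graphs in the sense of Serre, paths, and words with coefficients -/

structure SerreGraph where
  V : Type
  E : Type
  src : E → V
  bar : E → E
  bar_bar : ∀ e, bar (bar e) = e
  bar_ne : ∀ e, bar e ≠ e

namespace SerreGraph
variable (G : SerreGraph)

/-- The range (target) of an edge. -/
def rng (e : G.E) : G.V := G.src (G.bar e)

/-- Paths from `p` to `q`. -/
inductive Path : G.V → G.V → Type
  | nil (p : G.V) : Path p p
  | cons (e : G.E) {q : G.V} (w : Path (G.src (G.bar e)) q) : Path (G.src e) q

namespace Path
variable {G}

def toList : ∀ {p q : G.V}, G.Path p q → List G.E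
  | _, _, .nil _ => []
  | _, _, .cons e w => e :: toList w

/-- geodesic = no backtracking -/
def Geodesic {p q : G.V} (w : G.Path p q) : Prop :=
  (toList w).Chain' fun e f => f ≠ G.bar e

end Path

def Connected : Prop := ∀ p q : G.V, Nonempty (G.Path p q)

/-- `T` is a maximal subtree: edge set closed under reversal such that any two
vertices are joined by a unique geodesic path with edges in `T`. -/
structure IsMaximalSubtree (T : Set G.E) : Prop where
  bar_mem : ∀ e ∈ T, G.bar e ∈ T
  geodesic : ∀ p q : G.V, ∃! w : G.Path p q,
    (∀ e ∈ w.toList, e ∈ T) ∧ w.Geodesic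

/-- A word `a₀ u_{e₁} a₁ ⋯ u_{eₙ} aₙ` from `p` to `q`: a path together with a
coefficient in the vertex algebra at the source of each edge and a final
coefficient at `q`. -/
inductive Word (A : G.V → Type) : G.V → G.V → Type
  | nil {p : G.V} (a : A p) : Word A p p
  | cons (e : G.E) (a : A (G.src e)) {q : G.V}
      (w : Word A (G.src (G.bar e)) q) : Word A (G.src e) q

/-- A pair of words over the same underlying path. -/
inductive PairWord (A : G.V → Type) : G.V → G.V → Type
  | nil {p : G.V} (a b : A p) : PairWord A p p
  | cons (e : G.E) (a b : A (G.src e)) {q : G.V}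
      (w : PairWord A (G.src (G.bar e)) q) : PairWord A (G.src e) q

namespace Word
variable {G}
variable {A : G.V → Type}

/-- the underlying path of a word -/
def path : ∀ {p q : G.V}, G.Word A p q → G.Path p q
  | _, _, .nil _ => .nil _
  | _, _, .cons e _ w => .cons e (path w)

def startsWith : ∀ {p q : G.V}, G.Word A p q → G.E → Prop
  | _, _, .nil _, _ => False
  | _, _, .cons f _ _, e => f = e

variable [∀ v, Ring (A v)] [∀ v, StarRing (A v)]

/-- multiply the first coefficient on the left -/
def headMul : ∀ {p q : G.V}, G.Word A p q → A p → G.Word A p q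
  | _, _, .nil a, x => .nil (x * a)
  | _, _, .cons e a w, x => .cons e (x * a) w

/-- multiply the last coefficient on the right -/
def lastMul : ∀ {p q : G.V}, G.Word A p q → A q → G.Word A p q
  | _, _, .nil a, x => .nil (a * x)
  | _, _, .cons e a w, x => .cons e a (lastMul w x)

/-- the word over a given path with all coefficients `1` -/
def ones : ∀ {p q : G.V}, G.Path p q → G.Word A p q
  | _, _, .nil p => .nil (1 : A p)
  | _, _, .cons e w => .cons e 1 (ones w)

/-- `Reduced Epred prev w` : the word is reduced; `Epred e a` expresses
`E_e^s(a) = 0`. -/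
def Reduced (Epred : ∀ e : G.E, A (G.src e) → Prop) :
    ∀ {p q : G.V}, Option G.E → G.Word A p q → Prop
  | _, _, _, .nil _ => True
  | _, _, prev, .cons e a w =>
      ((prev = some (G.bar e)) → Epred e a) ∧ Reduced Epred (some e) w

end Word

namespace PairWord
variable {G}
variable {A : G.V → Type}

def fst : ∀ {p q : G.V}, G.PairWord A p q → G.Word A p q
  | _, _, .nil a _ => .nil a
  | _, _, .cons e a _ w => .cons e a (fst w)

def snd : ∀ {p q : G.V}, G.PairWord A p q → G.Word A p q
  | _, _, .nil _ b => .nil b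
  | _, _, .cons e _ b w => .cons e b (snd w)

variable [∀ v, Ring (A v)] [∀ v, StarRing (A v)]

/-- The recursion `x₀ = a₀* x b₀`, `x_k = a_k* T_{e_k}(x_{k-1}) b_k` of
Lemma 3.10, with accumulator `x`. -/
def xval (T : ∀ e : G.E, A (G.src e) → A (G.src (G.bar e))) :
    ∀ {p q : G.V}, G.PairWord A p q → A p → A q
  | _, _, .nil a b, x => star a * x * b
  | _, _, .cons e a b w, x => xval T w (T e (star a * x * b))

end PairWord
end SerreGraph

/-- The element `ι(a₀) u_{e₁} ι(a₁) ⋯ u_{eₙ} ι(aₙ)` of a ring `P`. -/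
def SerreGraph.Word.elt {G : SerreGraph} {A : G.V → Type} {P : Type} [Ring P]
    (ι : ∀ q, A q → P) (u : G.E → P) :
    ∀ {p q : G.V}, G.Word A p q → P
  | _, _, .nil (p := p) a => ι p a
  | _, _, .cons e a w => ι (G.src e) a * u e * elt ι u w

namespace SerreGraph

variable {G : SerreGraph} {A : G.V → Type}

/-- append an edge `e` (with `s(e) = q`) and a final coefficient to a word -/
def Word.snoc : ∀ {p q : G.V}, G.Word A p q → (e : G.E) → G.src e = q →
    A (G.src (G.bar e)) → G.Word A p (G.src (G.bar e))
  | _, _, .nil a, e, h, b => by subst h; exact .cons e a (.nil b)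
  | _, _, .cons f a w, e, h, b => .cons f a (w.snoc e h b)

/-- the diagonal pair of words -/
def Word.toPair : ∀ {p q : G.V}, G.Word A p q → G.PairWord A p q
  | _, _, .nil a => .nil a a
  | _, _, .cons e a w => .cons e a a (toPair w)

end SerreGraph

open SerreGraph

/-! Computing both norms through the recursion `xval`: appending `(e, a)` to a word with value
`X` produces `a* T_e(X) a`, so `ε_{r(e)}` multiplies `ε_{r(e)}(T_e X)` by `|ε(a)|²`. Since
`T_e X = s_ē(σ_e b)` where `E_e X = s_e b`, compatibility of the counits with `σ` gives
`ε_{r(e)}(T_e X) = ε_{s(e)}(E_e X)`, and `E_ē` fixes `T_e X`. -/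

namespace SerreGraph

variable {G : SerreGraph} {A : G.V → Type}

@[simp]
theorem Word.toPair_fst : ∀ {p q : G.V} (w : G.Word A p q), w.toPair.fst = w
  | _, _, .nil _ => rfl
  | _, _, .cons _ _ w => congrArg _ (toPair_fst w)

@[simp]
theorem Word.toPair_snd : ∀ {p q : G.V} (w : G.Word A p q), w.toPair.snd = w
  | _, _, .nil _ => rfl
  | _, _, .cons _ _ w => congrArg _ (toPair_snd w)

theorem Word.xval_toPair_snoc [∀ v, Ring (A v)] [∀ v, StarRing (A v)]
    (T : ∀ e : G.E, A (G.src e) → A (G.src (G.bar e))) (e : G.E) :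
    ∀ {r : G.V} (w : G.Word A r (G.src e)) (b : A (G.src (G.bar e))) (x : A r),
      (w.snoc e rfl b).toPair.xval T x = star b * T e (w.toPair.xval T x) * b
  | _, .nil _, _, _ => rfl
  | _, .cons f c w, b, x => xval_toPair_snoc T e w b (T f (star c * x * c))

section EdgeMaps

variable {B : G.E → Type}
  [∀ v, Semiring (A v)] [∀ v, Algebra ℂ (A v)] [∀ v, Star (A v)]
  [∀ e, Semiring (B e)] [∀ e, Algebra ℂ (B e)] [∀ e, Star (B e)]
  {σ : ∀ e, B e ≃⋆ₐ[ℂ] B (G.bar e)} {s : ∀ e, B e →⋆ₐ[ℂ] A (G.src e)}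
  {E : ∀ e, A (G.src e) →ₗ[ℂ] A (G.src e)} {T : ∀ e, A (G.src e) → A (G.src (G.bar e))}

theorem counit_T_eq_counit_E (hE_range : ∀ e a, ∃ b, E e a = s e b)
    (hT : ∀ e a (b : B e), E e a = s e b → T e a = s (G.bar e) (σ e b))
    {ε : ∀ q, A q →⋆ₐ[ℂ] ℂ}
    (hε : ∀ e (b : B e), ε (G.src e) (s e b) = ε (G.src (G.bar e)) (s (G.bar e) (σ e b)))
    (e : G.E) (x : A (G.src e)) :
    ε (G.src (G.bar e)) (T e x) = ε (G.src e) (E e x) := by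
  obtain ⟨b, hb⟩ := hE_range e x
  rw [hT e x b hb, hb, hε e b]

theorem E_bar_T_eq (hE_range : ∀ e a, ∃ b, E e a = s e b)
    (hE_fix : ∀ e (b : B e), E e (s e b) = s e b)
    (hT : ∀ e a (b : B e), E e a = s e b → T e a = s (G.bar e) (σ e b))
    (e : G.E) (x : A (G.src e)) :
    E (G.bar e) (T e x) = T e x := by
  obtain ⟨b, hb⟩ := hE_range e x
  rw [hT e x b hb, hE_fix]

end EdgeMaps

end SerreGraph

theorem norm_sq_eq_of_inner_self_eq {F₁ F₂ : Type*}
    [NormedAddCommGroup F₁] [InnerProductSpace ℂ F₁]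
    [NormedAddCommGroup F₂] [InnerProductSpace ℂ F₂]
    {x : F₁} {y : F₂} (c : ℂ) (h : inner ℂ x x = star c * inner ℂ y y * c) :
    ‖x‖ ^ 2 = ‖c‖ ^ 2 * ‖y‖ ^ 2 := by
  have h' := congrArg norm h
  rw [inner_self_eq_norm_sq_to_K, inner_self_eq_norm_sq_to_K] at h'
  simp only [norm_mul, norm_star, norm_pow, RCLike.norm_ofReal, abs_norm] at h'
  rw [h']
  ring

theorem stmt14_general (G : SerreGraph)
    (A : G.V → Type) [∀ q, CStarAlgebra (A q)]
    (B : G.E → Type) [∀ e, CStarAlgebra (B e)]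
    (σ : ∀ e, B e ≃⋆ₐ[ℂ] B (G.bar e))
    (s : ∀ e, B e →⋆ₐ[ℂ] A (G.src e))
    (E : ∀ e, A (G.src e) →ₗ[ℂ] A (G.src e))
    (hE_range : ∀ e a, ∃ b, E e a = s e b)
    (hE_fix : ∀ e (b : B e), E e (s e b) = s e b)
    (T : ∀ e, A (G.src e) → A (G.src (G.bar e)))
    (hT : ∀ e a (b : B e), E e a = s e b → T e a = s (G.bar e) (σ e b))
    -- amenability: the counit characters, compatible with the edge embeddings
    (ε : ∀ q, A q →⋆ₐ[ℂ] ℂ)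
    (hε : ∀ e (b : B e), ε (G.src e) (s e b) = ε (G.src (G.bar e)) (s (G.bar e) (σ e b)))
    -- the base vertex
    (p : G.V)
    -- the GNS spaces `L_{p,q}` of `(H_{p,q}, ε_q)`
    (L : G.V → Type) [∀ q, NormedAddCommGroup (L q)]
    [∀ q, InnerProductSpace ℂ (L q)]
    (ηL : ∀ {q : G.V}, G.Word A p q → L q)
    (hL : ∀ q (pw : G.PairWord A p q),
      (inner ℂ (ηL pw.fst) (ηL pw.snd) : ℂ) = ε q (pw.xval T 1))
    -- the GNS spaces `K_{p,f}` of `(H_{p,s(f)}, ε_{s(f)} ∘ E_f^s)`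
    (K : G.E → Type) [∀ f, NormedAddCommGroup (K f)]
    [∀ f, InnerProductSpace ℂ (K f)]
    (ηK : ∀ f : G.E, G.Word A p (G.src f) → K f)
    (hK : ∀ f (pw : G.PairWord A p (G.src f)),
      (inner ℂ (ηK f pw.fst) (ηK f pw.snd) : ℂ) = ε (G.src f) (E f (pw.xval T 1))) :
    ∀ (q' : G.V) (w' : G.Word A p q') (e : G.E) (h : G.src e = q')
      (a : A (G.src (G.bar e))),
      ‖ηL (w'.snoc e h a)‖ ^ 2
          = ‖ε (G.src (G.bar e)) a‖ ^ 2 *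
            ‖ηK e (cast (congrArg (G.Word A p) h.symm) w')‖ ^ 2 ∧
      ‖ηL (w'.snoc e h a)‖ ^ 2
          = ‖ε (G.src (G.bar e)) a‖ ^ 2 *
            ‖ηK (G.bar e) (w'.snoc e h 1)‖ ^ 2 := by
  intro q w e h a
  subst h
  have hL_self : ∀ {q} (w : G.Word A p q), inner ℂ (ηL w) (ηL w) = ε q (w.toPair.xval T 1) :=
    fun w => by simpa using hL _ w.toPair
  have hK_self : ∀ f (w : G.Word A p (G.src f)),
      inner ℂ (ηK f w) (ηK f w) = ε (G.src f) (E f (w.toPair.xval T 1)) :=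
    fun f w => by simpa using hK f w.toPair
  have hL_snoc : inner ℂ (ηL (w.snoc e rfl a)) (ηL (w.snoc e rfl a))
      = star (ε _ a) * ε _ (T e (w.toPair.xval T 1)) * ε _ a := by
    rw [hL_self, Word.xval_toPair_snoc, map_mul, map_mul, map_star]
  refine ⟨norm_sq_eq_of_inner_self_eq _ ?_, norm_sq_eq_of_inner_self_eq _ ?_⟩
  · rw [hL_snoc, cast_eq, hK_self, counit_T_eq_counit_E hE_range hT hε]
  · rw [hL_snoc, hK_self, Word.xval_toPair_snoc, star_one, one_mul, mul_one,
      E_bar_T_eq hE_range hE_fix hT]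

/-- (Lemma 5.2)  With `L_{p,q}` the GNS space of `(H_{p,q}, ε_q)`
and `K_{p,f}` the GNS space of `(H_{p,s(f)}, ε_{s(f)} ∘ E_f^s)`, for any path
`w = (e₁,…,eₙ)` from `p` to `q` and any elementary tensor `a = â₀ ⊗ ⋯ ⊗ aₙ ∈ H_w`:
`‖η_{p,q}(a)‖² = |ε_q(aₙ)|² ‖η_{p,eₙ}(â₀⊗⋯⊗a_{n-1})‖²
             = |ε_q(aₙ)|² ‖η_{p,ēₙ}(â₀⊗⋯⊗â_{n-1}⊗1)‖²`. -/
theorem stmt14 (G : SerreGraph)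
    (A : G.V → Type) [∀ q, CStarAlgebra (A q)]
    (B : G.E → Type) [∀ e, CStarAlgebra (B e)]
    (σ : ∀ e, B e ≃⋆ₐ[ℂ] B (G.bar e))
    (s : ∀ e, B e →⋆ₐ[ℂ] A (G.src e)) (hs : ∀ e, Function.Injective (s e))
    (E : ∀ e, A (G.src e) →ₗ[ℂ] A (G.src e))
    (hE_range : ∀ e a, ∃ b, E e a = s e b)
    (hE_fix : ∀ e (b : B e), E e (s e b) = s e b)
    (hE_bimod : ∀ e (b b' : B e) (a : A (G.src e)),
      E e (s e b * a * s e b') = s e b * E e a * s e b')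
    (T : ∀ e, A (G.src e) → A (G.src (G.bar e)))
    (hT : ∀ e a (b : B e), E e a = s e b → T e a = s (G.bar e) (σ e b))
    -- amenability: the counit characters, compatible with the edge embeddings
    (ε : ∀ q, A q →⋆ₐ[ℂ] ℂ)
    (hε : ∀ e (b : B e), ε (G.src e) (s e b) = ε (G.src (G.bar e)) (s (G.bar e) (σ e b)))
    -- the base vertex
    (p : G.V)
    -- the GNS spaces `L_{p,q}` of `(H_{p,q}, ε_q)`
    (L : G.V → Type) [∀ q, NormedAddCommGroup (L q)]
    [∀ q, InnerProductSpace ℂ (L q)] [∀ q, CompleteSpace (L q)]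
    (ηL : ∀ {q : G.V}, G.Word A p q → L q)
    (hL : ∀ q (pw : G.PairWord A p q),
      (inner ℂ (ηL pw.fst) (ηL pw.snd) : ℂ) = ε q (pw.xval T 1))
    (hLorth : ∀ q (wa wb : G.Word A p q), wa.path ≠ wb.path →
      (inner ℂ (ηL wa) (ηL wb) : ℂ) = 0)
    -- the GNS spaces `K_{p,f}` of `(H_{p,s(f)}, ε_{s(f)} ∘ E_f^s)`
    (K : G.E → Type) [∀ f, NormedAddCommGroup (K f)]
    [∀ f, InnerProductSpace ℂ (K f)] [∀ f, CompleteSpace (K f)]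
    (ηK : ∀ f : G.E, G.Word A p (G.src f) → K f)
    (hK : ∀ f (pw : G.PairWord A p (G.src f)),
      (inner ℂ (ηK f pw.fst) (ηK f pw.snd) : ℂ) = ε (G.src f) (E f (pw.xval T 1)))
    (hKorth : ∀ f (wa wb : G.Word A p (G.src f)), wa.path ≠ wb.path →
      (inner ℂ (ηK f wa) (ηK f wb) : ℂ) = 0) :
    ∀ (q' : G.V) (w' : G.Word A p q') (e : G.E) (h : G.src e = q')
      (a : A (G.src (G.bar e))),
      ‖ηL (w'.snoc e h a)‖ ^ 2
          = ‖ε (G.src (G.bar e)) a‖ ^ 2 *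
            ‖ηK e (cast (congrArg (G.Word A p) h.symm) w')‖ ^ 2 ∧
      ‖ηL (w'.snoc e h a)‖ ^ 2
          = ‖ε (G.src (G.bar e)) a‖ ^ 2 *
            ‖ηK (G.bar e) (w'.snoc e h 1)‖ ^ 2 :=
  stmt14_general G A B σ s E hE_range hE_fix T hT ε hε p L ηL hL K ηK hK
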